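/- arXiv:1711.06772 — 12 statements merged into one kernel-verified Lean document; each statement's English description precedes it below -/
import Mathlib

section
/- The 3×3 discrete function given by the array [[a,b,a],[c,a,b],[b,b,a]], where a, b, c are pairwise distinct outcomes, is not separable, but every function obtained from it by deleting one row or one column is separable. -/
/-- The 3×3 discrete function [[a,b,a],[c,a,b],[b,b,a]] with a,b,c pairwise distinct
is not separable, but deleting any row or any column yields a separable function. -/
theorem stmt3 {A : Type*} (a b c : A)
    (hab : a ≠ b) (hac : a ≠ c) (hbc : b ≠ c) :
    (¬ ∃ (g₁ : Fin 3 → A) (g₂ : Fin 3 → A),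
      ∀ (i : Fin 3) (j : Fin 3),
        (![![a, b, a], ![c, a, b], ![b, b, a]] : Matrix (Fin 3) (Fin 3) A) i j = g₁ i ∨
        (![![a, b, a], ![c, a, b], ![b, b, a]] : Matrix (Fin 3) (Fin 3) A) i j = g₂ j) ∧
    (∀ r : Fin 3, ∃ (g₁ : Fin 3 → A) (g₂ : Fin 3 → A),
      ∀ (i : Fin 3) (j : Fin 3), i ≠ r →
        ((![![a, b, a], ![c, a, b], ![b, b, a]] : Matrix (Fin 3) (Fin 3) A) i j = g₁ i ∨
         (![![a, b, a], ![c, a, b], ![b, b, a]] : Matrix (Fin 3) (Fin 3) A) i j = g₂ j)) ∧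
    (∀ s : Fin 3, ∃ (g₁ : Fin 3 → A) (g₂ : Fin 3 → A),
      ∀ (i : Fin 3) (j : Fin 3), j ≠ s →
        ((![![a, b, a], ![c, a, b], ![b, b, a]] : Matrix (Fin 3) (Fin 3) A) i j = g₁ i ∨
         (![![a, b, a], ![c, a, b], ![b, b, a]] : Matrix (Fin 3) (Fin 3) A) i j = g₂ j)) := by
  refine ⟨?_, ?_, ?_⟩
  · rintro ⟨g₁, g₂, h⟩
    have h00 := h 0 0; have h01 := h 0 1
    have h10 := h 1 0; have h11 := h 1 1; have h12 := h 1 2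
    have h20 := h 2 0; have h21 := h 2 1; have h22 := h 2 2
    simp only [Matrix.cons_val', Matrix.cons_val_zero, Matrix.cons_val_one, Matrix.head_cons,
      Matrix.empty_val', Matrix.cons_val_fin_one, Matrix.head_fin_const,
      Matrix.cons_val_two, Matrix.tail_cons] at h00 h01 h10 h11 h12 h20 h21 h22
    rcases h10 with h10 | h10 <;> rcases h11 with h11 | h11 <;>
      rcases h12 with h12 | h12 <;> rcases h00 with h00 | h00 <;>
      rcases h01 with h01 | h01 <;> rcases h20 with h20 | h20 <;>
      rcases h21 with h21 | h21 <;> rcases h22 with h22 | h22 <;>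
      simp_all
  · intro r
    fin_cases r
    · exact ⟨![a, b, b], ![c, a, a], by intro i j hi; fin_cases i <;> fin_cases j <;> simp_all⟩
    · exact ⟨![a, a, b], ![a, b, a], by intro i j hi; fin_cases i <;> fin_cases j <;> simp_all⟩
    · exact ⟨![a, a, a], ![c, b, b], by intro i j hi; fin_cases i <;> fin_cases j <;> simp_all⟩
  · intro s
    fin_cases s
    · exact ⟨![b, b, b], ![a, a, a], by intro i j hj; fin_cases i <;> fin_cases j <;> simp_all⟩
    · exact ⟨![a, b, b], ![c, a, a], by intro i j hj; fin_cases i <;> fin_cases j <;> simp_all⟩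
    · exact ⟨![b, c, b], ![a, a, a], by intro i j hj; fin_cases i <;> fin_cases j <;> simp_all⟩
end

section
/- Any two-person discrete function with at most two outcomes is separable. -/
/-- Any two-person discrete function with at most two outcomes is separable. -/
theorem stmt4 {X₁ X₂ A : Type*}
    [Fintype X₁] [Nonempty X₁] [Fintype X₂] [Nonempty X₂] [Fintype A]
    (hA : Fintype.card A ≤ 2) (g : X₁ → X₂ → A) :
    ∃ (g₁ : X₁ → A) (g₂ : X₂ → A),
      ∀ (x₁ : X₁) (x₂ : X₂), g x₁ x₂ = g₁ x₁ ∨ g x₁ x₂ = g₂ x₂ := by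
  classical
  set b : A := g (Classical.arbitrary X₁) (Classical.arbitrary X₂) with hb
  have key : ∀ x y : A, x ≠ b → y ≠ b → x = y := by
    intro x y hx hy
    by_contra hxy
    have : ({x, y, b} : Finset A).card ≤ 2 :=
      le_trans (Finset.card_le_univ _) hA
    have h3 : ({x, y, b} : Finset A).card = 3 := by
      rw [Finset.card_insert_of_notMem (by simp [hxy, hx]),
        Finset.card_insert_of_notMem (by simp [hy]), Finset.card_singleton]
    omega
  refine ⟨fun x₁ => if h : ∃ x₂, g x₁ x₂ ≠ b then g x₁ h.choose else b,
    fun _ => b, fun x₁ x₂ => ?_⟩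
  by_cases hx : g x₁ x₂ = b
  · exact Or.inr hx
  · left
    have h : ∃ x₂, g x₁ x₂ ≠ b := ⟨x₂, hx⟩
    simp only [dif_pos h]
    exact key _ _ hx h.choose_spec
end

section
/- (Forbidden configuration.) Let g be an n-person game form, i a direction, and H_j, H_k two distinct parallel hyperplanes perpendicular to direction i. Suppose there are four lines ℓ¹,ℓ²,ℓ³,ℓ⁴ in direction i meeting H_j in points x_j¹,…,x_j⁴ and H_k in points x_k¹,…,x_k⁴ such that g(x_j¹) ≠ g(x_j²), g(x_k³) ≠ g(x_k⁴), and g(x_jⁱ) ≠ g(x_kⁱ) for all i = 1,…,4. Then g is not weakly totally tight. -/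
/-- `g` is weakly totally tight: for every direction `i`, every two lines in
direction `i` (represented by profiles `p`, `p'`) and every two hyperplanes
perpendicular to direction `i` (represented by coordinates `v`, `v'`), the
2×2 array of values at the four intersections contains a constant row or column. -/
def WTT {n : ℕ} {X : Fin n → Type*} {A : Type*} (g : (∀ i, X i) → A) : Prop :=
  ∀ (i : Fin n) (p p' : ∀ j, X j) (v v' : X i),
    g (Function.update p i v) = g (Function.update p i v') ∨
    g (Function.update p i v) = g (Function.update p' i v) ∨
    g (Function.update p' i v') = g (Function.update p' i v) ∨
    g (Function.update p' i v') = g (Function.update p i v')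

/-- The hyperplane `{x | x i = v}` dominates the parallel hyperplane
`{x | x i = v'}` by outcome `c`: every point of the first hyperplane whose
value differs from the corresponding point (along the line in direction `i`)
of the second hyperplane has value `c`. -/
def Dominates {n : ℕ} {X : Fin n → Type*} {A : Type*} (g : (∀ i, X i) → A)
    (i : Fin n) (v v' : X i) (c : A) : Prop :=
  ∀ x : ∀ j, X j, x i = v → g x ≠ g (Function.update x i v') → g x = c

/-- Strict domination: `{x i = v}` dominates `{x i = v'}` by `c` while
`{x i = v'}` dominates `{x i = v}` by no outcome. -/
def StrictlyDominates {n : ℕ} {X : Fin n → Type*} {A : Type*} (g : (∀ i, X i) → A)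
    (i : Fin n) (v v' : X i) (c : A) : Prop :=
  Dominates g i v v' c ∧ ¬ ∃ d, Dominates g i v' v d

/-- No hyperplane of `g` is a constant region. -/
def NoConstantHyperplane {n : ℕ} {X : Fin n → Type*} {A : Type*}
    (g : (∀ i, X i) → A) : Prop :=
  ∀ (i : Fin n) (v : X i), ∃ x y : ∀ j, X j, x i = v ∧ y i = v ∧ g x ≠ g y

/-- No two distinct parallel hyperplanes of `g` are identical. -/
def NoDuplicateHyperplanes {n : ℕ} {X : Fin n → Type*} {A : Type*}
    (g : (∀ i, X i) → A) : Prop :=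
  ∀ (i : Fin n) (v v' : X i), v ≠ v' →
    ∃ x : ∀ j, X j, x i = v ∧ g x ≠ g (Function.update x i v')

/-- Forbidden configuration: two distinct parallel hyperplanes (coordinates
`vj ≠ vk` in direction `i`) and four lines `p 0, p 1, p 2, p 3` in direction
`i` with the stated inequality pattern force `g` not to be WTT. -/
theorem stmt7 {n : ℕ} {X : Fin n → Type*} {A : Type*} [∀ i, Fintype (X i)]
    (g : (∀ i, X i) → A) (i : Fin n) (vj vk : X i) (hjk : vj ≠ vk)
    (p : Fin 4 → ∀ j, X j)
    (h1 : g (Function.update (p 0) i vj) ≠ g (Function.update (p 1) i vj))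
    (h2 : g (Function.update (p 2) i vk) ≠ g (Function.update (p 3) i vk))
    (h3 : ∀ t : Fin 4,
      g (Function.update (p t) i vj) ≠ g (Function.update (p t) i vk)) :
    ¬ WTT g := by
  intro hW
  set a : Fin 4 → A := fun t => g (Function.update (p t) i vj) with ha
  set b : Fin 4 → A := fun t => g (Function.update (p t) i vk) with hb
  have key : ∀ t s : Fin 4, a t = a s ∨ b s = b t := by
    intro t s
    rcases hW i (p t) (p s) vj vk with h | h | h | h
    · exact absurd h (h3 t)
    · exact Or.inl h
    · exact absurd h.symm (h3 s)
    · exact Or.inr h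
  have hb01 : b 0 = b 1 := ((key 0 1).resolve_left h1).symm
  have ha23 : a 2 = a 3 := (key 2 3).resolve_right fun h => h2 h.symm
  have main : ¬ (a 0 = a 2) := by
    intro h02
    have h12 : a 1 ≠ a 2 := fun h => h1 (h02.trans h.symm)
    have hb21 : b 2 = b 1 := ((key 1 2).resolve_left h12)
    have h13 : a 1 ≠ a 3 := ha23 ▸ h12
    have hb31 : b 3 = b 1 := ((key 1 3).resolve_left h13)
    exact h2 (hb21.trans hb31.symm)
  have hb20 : b 2 = b 0 := ((key 0 2).resolve_left main)
  have hb30 : b 3 ≠ b 0 := fun h => h2 (hb20.trans h.symm)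
  have h03 : a 0 = a 3 := (key 0 3).resolve_right hb30
  exact main (h03.trans ha23.symm)
end

section
/- Let g be an n-person WTT game form, i a direction, and H_j, H_k two distinct parallel hyperplanes perpendicular to direction i. Then the set H_j^≠(k) of points of H_j whose value differs from the value at the corresponding point of H_k (along the line in direction i) is a constant region, or the analogously defined set H_k^≠(j) is a constant region (or both). -/
/-- For a WTT game form and two distinct parallel hyperplanes `H_j = {x i = vj}`
and `H_k = {x i = vk}`, the region of `H_j` differing from `H_k` is constant,
or the region of `H_k` differing from `H_j` is constant (or both). -/
theorem stmt8 {n : ℕ} {X : Fin n → Type*} {A : Type*}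
    [∀ i, Fintype (X i)] [∀ i, Nonempty (X i)]
    (g : (∀ i, X i) → A) (hWTT : WTT g)
    (i : Fin n) (vj vk : X i) (hjk : vj ≠ vk) :
    (∃ c, ∀ x : ∀ j, X j, x i = vj → g x ≠ g (Function.update x i vk) → g x = c) ∨
    (∃ c, ∀ x : ∀ j, X j, x i = vk → g x ≠ g (Function.update x i vj) → g x = c) := by
  classical
  -- key claim: two points of a "differing region" with different values have
  -- equal partners on the other hyperplane
  have key : ∀ (a b : X i) (x y : ∀ j, X j), x i = a → y i = a →
      g x ≠ g (Function.update x i b) → g y ≠ g (Function.update y i b) →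
      g x ≠ g y → g (Function.update x i b) = g (Function.update y i b) := by
    intro a b x y hx hy hxb hyb hxy
    have ex : Function.update x i a = x := by rw [← hx]; exact Function.update_eq_self i x
    have ey : Function.update y i a = y := by rw [← hy]; exact Function.update_eq_self i y
    rcases hWTT i x y b a with h | h | h | h
    · rw [ex] at h; exact absurd h.symm hxb
    · exact h
    · rw [ey] at h; exact absurd h hyb
    · rw [ey, ex] at h; exact absurd h.symm hxy
  by_contra h
  push_neg at h
  obtain ⟨hj, hk⟩ := h
  have z : ∀ j, X j := fun j => Classical.arbitrary _
  obtain ⟨u, hu1, hu2, -⟩ := hk (g z)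
  obtain ⟨w, hw1, hw2, hw3⟩ := hk (g u)
  obtain ⟨x, hx1, hx2, -⟩ := hj (g z)
  obtain ⟨y, hy1, hy2, hy3⟩ := hj (g x)
  -- partners of u and w on the vj-hyperplane have equal value a
  have hba : g (Function.update w i vj) = g (Function.update u i vj) :=
    key vk vj w u hw1 hu1 hw2 hu2 hw3
  set a := g (Function.update u i vj) with ha
  -- the partners are points of the differing region of H_j
  have upartner : ∀ (u : ∀ j, X j), u i = vk →
      Function.update (Function.update u i vj) i vk = u := by
    intro u hu
    rw [Function.update_idem, ← hu]
    exact Function.update_eq_self i u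
  -- for any point z of H_j's differing region with g z ≠ a,
  -- the partner of z equals g u and g w
  have main : ∀ z : ∀ j, X j, z i = vj → g z ≠ g (Function.update z i vk) →
      g z ≠ a → False := by
    intro p hp1 hp2 hpa
    have h1 : g (Function.update p i vk) = g u := by
      have := key vj vk p (Function.update u i vj) hp1 (Function.update_self i vj u)
        hp2 ?_ ?_
      · rw [upartner u hu1] at this; exact this
      · rw [upartner u hu1]; exact fun hc => hu2 hc.symm
      · exact hpa
    have h2 : g (Function.update p i vk) = g w := by
      have := key vj vk p (Function.update w i vj) hp1 (Function.update_self i vj w)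
        hp2 ?_ ?_
      · rw [upartner w hw1] at this; exact this
      · rw [upartner w hw1]; exact fun hc => hw2 hc.symm
      · rw [hba]; exact hpa
    exact hw3 (h2.symm.trans h1)
  by_cases hxa : g x = a
  · exact main y hy1 hy2 (fun hc => hy3 (hc.trans hxa.symm))
  · exact main x hx1 hx2 hxa
end

section
/- A game form g is WTT if and only if for every direction i and every pair of distinct parallel hyperplanes H_j, H_k perpendicular to direction i, exactly one of the following holds: (1) H_j strictly dominates H_k by some outcome c, and H_k^≠(j) contains two distinct outcomes (both different from c); (2) symmetrically with j and k exchanged; (3) H_j dominates H_k by some outcome c and H_k dominates H_j by some outcome d with c ≠ d. -/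
/-- Condition (1) of the characterization: `{x i = vj}` strictly dominates
`{x i = vk}` by some outcome `c`, and the region of `{x i = vk}` differing from
`{x i = vj}` contains two distinct outcomes, both different from `c`. -/
def Cond1 {n : ℕ} {X : Fin n → Type*} {A : Type*} (g : (∀ i, X i) → A)
    (i : Fin n) (vj vk : X i) : Prop :=
  ∃ c, StrictlyDominates g i vj vk c ∧
    ∃ x y : ∀ j, X j, x i = vk ∧ y i = vk ∧
      g x ≠ g (Function.update x i vj) ∧ g y ≠ g (Function.update y i vj) ∧
      g x ≠ g y ∧ g x ≠ c ∧ g y ≠ c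

/-- Condition (3) of the characterization: mutual domination by two distinct
outcomes. -/
def Cond3 {n : ℕ} {X : Fin n → Type*} {A : Type*} (g : (∀ i, X i) → A)
    (i : Fin n) (vj vk : X i) : Prop :=
  ∃ c d, c ≠ d ∧ Dominates g i vj vk c ∧ Dominates g i vk vj d

/-- Exactly one of three propositions holds. -/
def ExactlyOne (P Q R : Prop) : Prop :=
  (P ∧ ¬ Q ∧ ¬ R) ∨ (¬ P ∧ Q ∧ ¬ R) ∨ (¬ P ∧ ¬ Q ∧ R)

lemma dominates_iff {n : ℕ} {X : Fin n → Type*} {A : Type*} (g : (∀ i, X i) → A)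
    (i : Fin n) (v v' : X i) (c : A) :
    Dominates g i v v' c ↔
      ∀ p : ∀ j, X j, g (Function.update p i v) ≠ g (Function.update p i v') →
        g (Function.update p i v) = c := by
  constructor
  · intro h p hp
    refine h (Function.update p i v) (Function.update_self ..) ?_
    rwa [Function.update_idem]
  · intro h x hx hne
    have hx' : Function.update x i v = x := by
      rw [← hx]; exact Function.update_eq_self ..
    have := h x
    rw [hx'] at this
    exact this hne

/-- Characterization of WTT: a game form with no duplicate parallel hyperplanes
is WTT iff every pair of distinct parallel hyperplanes satisfies exactly one of
the conditions (1), (2), (3). -/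
theorem stmt9 {n : ℕ} {X : Fin n → Type*} {A : Type*}
    [∀ i, Fintype (X i)] [∀ i, Nonempty (X i)]
    (g : (∀ i, X i) → A) (hdup : NoDuplicateHyperplanes g) :
    WTT g ↔ ∀ (i : Fin n) (vj vk : X i), vj ≠ vk →
      ExactlyOne (Cond1 g i vj vk) (Cond1 g i vk vj) (Cond3 g i vj vk) := by
  classical
  constructor
  · intro hW i vj vk hne
    obtain ⟨p₀, hp₀i, hp₀⟩ := hdup i vj vk hne
    have hp₀v : Function.update p₀ i vj = p₀ := by
      rw [← hp₀i]; exact Function.update_eq_self ..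
    have hD₀ : g (Function.update p₀ i vj) ≠ g (Function.update p₀ i vk) := by
      rw [hp₀v]; exact hp₀
    have hC : ∀ p q : ∀ j, X j,
        g (Function.update p i vj) ≠ g (Function.update p i vk) →
        g (Function.update q i vj) ≠ g (Function.update q i vk) →
        g (Function.update p i vj) = g (Function.update q i vj) ∨
        g (Function.update p i vk) = g (Function.update q i vk) := by
      intro p q hp hq
      rcases hW i p q vj vk with h | h | h | h
      · exact absurd h hp
      · exact Or.inl h
      · exact absurd h.symm hq
      · exact Or.inr h.symm
    have key : ¬ (∀ p : ∀ j, X j,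
          g (Function.update p i vj) ≠ g (Function.update p i vk) →
          g (Function.update p i vj) = g (Function.update p₀ i vj)) →
        (∀ p : ∀ j, X j,
          g (Function.update p i vj) ≠ g (Function.update p i vk) →
          g (Function.update p i vk) = g (Function.update p₀ i vk)) := by
      intro hnF
      push_neg at hnF
      obtain ⟨q, hq, hfq⟩ := hnF
      have hq0 : g (Function.update q i vk) = g (Function.update p₀ i vk) :=
        (hC q p₀ hq hD₀).resolve_left hfq
      intro r hr
      by_contra hr0
      have h1 : g (Function.update r i vj) = g (Function.update p₀ i vj) :=
        (hC r p₀ hr hD₀).resolve_right hr0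
      have h2 : g (Function.update q i vk) ≠ g (Function.update r i vk) :=
        fun h => hr0 (h.symm.trans hq0)
      have h3 : g (Function.update q i vj) = g (Function.update r i vj) :=
        (hC q r hq hr).resolve_right h2
      exact hfq (h3.trans h1)
    by_cases hF : ∀ p : ∀ j, X j,
        g (Function.update p i vj) ≠ g (Function.update p i vk) →
        g (Function.update p i vj) = g (Function.update p₀ i vj)
    · have domJK : Dominates g i vj vk (g (Function.update p₀ i vj)) :=
        (dominates_iff g i vj vk _).mpr hF
      by_cases hF' : ∀ p : ∀ j, X j,
          g (Function.update p i vj) ≠ g (Function.update p i vk) →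
          g (Function.update p i vk) = g (Function.update p₀ i vk)
      · -- both constant: Cond3
        have domKJ : Dominates g i vk vj (g (Function.update p₀ i vk)) :=
          (dominates_iff g i vk vj _).mpr (fun p hp => hF' p (Ne.symm hp))
        refine Or.inr (Or.inr ⟨?_, ?_, ?_⟩)
        · rintro ⟨c, ⟨-, hno⟩, -⟩
          exact hno ⟨_, domKJ⟩
        · rintro ⟨c, ⟨-, hno⟩, -⟩
          exact hno ⟨_, domJK⟩
        · exact ⟨_, _, hD₀, domJK, domKJ⟩
      · -- Cond1 vj vk
        have noDomKJ : ¬ ∃ d, Dominates g i vk vj d := by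
          rintro ⟨d, hd⟩
          apply hF'
          intro p hp
          exact ((dominates_iff g i vk vj d).mp hd p (Ne.symm hp)).trans
            (((dominates_iff g i vk vj d).mp hd p₀ (Ne.symm hD₀)).symm)
        push_neg at hF'
        obtain ⟨q, hq, hfq⟩ := hF'
        refine Or.inl ⟨⟨g (Function.update p₀ i vj), ⟨domJK, noDomKJ⟩,
          Function.update q i vk, Function.update p₀ i vk,
          Function.update_self .., Function.update_self .., ?_, ?_, ?_, ?_, ?_⟩,
          ?_, ?_⟩
        · rw [Function.update_idem]; exact Ne.symm hq
        · rw [Function.update_idem]; exact Ne.symm hD₀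
        · exact hfq
        · exact fun h => hq ((hF q hq).trans h.symm)
        · exact Ne.symm hD₀
        · rintro ⟨c, ⟨-, hno⟩, -⟩
          exact hno ⟨_, domJK⟩
        · rintro ⟨c, d, -, -, hdkj⟩
          exact noDomKJ ⟨d, hdkj⟩
    · -- f not constant on D, so f' constant: Cond1 vk vj
      have hF'2 := key hF
      have domKJ : Dominates g i vk vj (g (Function.update p₀ i vk)) :=
        (dominates_iff g i vk vj _).mpr (fun p hp => hF'2 p (Ne.symm hp))
      have noDomJK : ¬ ∃ c, Dominates g i vj vk c := by
        rintro ⟨c, hc⟩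
        apply hF
        intro p hp
        exact ((dominates_iff g i vj vk c).mp hc p hp).trans
          (((dominates_iff g i vj vk c).mp hc p₀ hD₀).symm)
      push_neg at hF
      obtain ⟨q, hq, hfq⟩ := hF
      refine Or.inr (Or.inl ⟨?_, ⟨g (Function.update p₀ i vk), ⟨domKJ, noDomJK⟩,
        Function.update q i vj, Function.update p₀ i vj,
        Function.update_self .., Function.update_self .., ?_, ?_, ?_, ?_, ?_⟩, ?_⟩)
      · rintro ⟨c, ⟨hdjk, -⟩, -⟩
        exact noDomJK ⟨c, hdjk⟩
      · rw [Function.update_idem]; exact hq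
      · rw [Function.update_idem]; exact hD₀
      · exact hfq
      · exact fun h => hq (h.trans (hF'2 q hq).symm)
      · exact hD₀
      · rintro ⟨c, d, -, hdjk, -⟩
        exact noDomJK ⟨c, hdjk⟩
  · intro H i p q v v'
    by_cases hvv : v = v'
    · subst hvv; exact Or.inl rfl
    · have hE := H i v v' hvv
      have hdom : (∃ c, Dominates g i v v' c) ∨ (∃ d, Dominates g i v' v d) := by
        rcases hE with ⟨⟨c, ⟨hd, -⟩, -⟩, -, -⟩ | ⟨-, ⟨c, ⟨hd, -⟩, -⟩, -⟩ |
          ⟨-, -, ⟨c, d, -, hd, hd'⟩⟩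
        · exact Or.inl ⟨c, hd⟩
        · exact Or.inr ⟨c, hd⟩
        · exact Or.inl ⟨c, hd⟩
      by_cases hp : g (Function.update p i v) = g (Function.update p i v')
      · exact Or.inl hp
      by_cases hq : g (Function.update q i v) = g (Function.update q i v')
      · exact Or.inr (Or.inr (Or.inl hq.symm))
      rcases hdom with ⟨c, hc⟩ | ⟨d, hd⟩
      · have h1 := (dominates_iff g i v v' c).mp hc p hp
        have h2 := (dominates_iff g i v v' c).mp hc q hq
        exact Or.inr (Or.inl (h1.trans h2.symm))
      · have h1 := (dominates_iff g i v' v d).mp hd p (Ne.symm hp)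
        have h2 := (dominates_iff g i v' v d).mp hd q (Ne.symm hq)
        exact Or.inr (Or.inr (Or.inr (h2.trans h1.symm)))
end

section
/- In a WTT game form, every hyperplane either has a proper outcome (it strictly dominates some parallel hyperplane, and by uniqueness the dominating outcome is well defined) or is a sink hyperplane (it is dominated by every other parallel hyperplane). -/
theorem key_dom {n : ℕ} {X : Fin n → Type*} {A : Type*} [∀ j, Nonempty (X j)]
    (g : (∀ j, X j) → A) (hWTT : WTT g) (i : Fin n) (v v' : X i)
    (h : ¬ ∃ c, Dominates g i v v' c) : ∃ d, Dominates g i v' v d := by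
  have h' : ∀ c, ∃ x, x i = v ∧ g x ≠ g (Function.update x i v') ∧ g x ≠ c := by
    intro c
    by_contra hc
    push_neg at hc
    exact h ⟨c, hc⟩
  obtain ⟨p, hpv, hpd, _⟩ := h' (g (Classical.arbitrary _))
  obtain ⟨q, hqv, hqd, hqp⟩ := h' (g p)
  have hup : Function.update p i v = p := by rw [← hpv, Function.update_eq_self]
  have huq : Function.update q i v = q := by rw [← hqv, Function.update_eq_self]
  have hpq : g (Function.update q i v') = g (Function.update p i v') := by
    rcases hWTT i p q v v' with h1 | h2 | h3 | h4
    · rw [hup] at h1; exact absurd h1 hpd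
    · rw [hup, huq] at h2; exact absurd h2.symm hqp
    · rw [huq] at h3; exact absurd h3.symm hqd
    · exact h4
  refine ⟨g (Function.update p i v'), fun z' hz' hzd => ?_⟩
  have huz : Function.update z' i v' = z' := by rw [← hz', Function.update_eq_self]
  rcases hWTT i z' p v v' with h1 | h2 | h3 | h4
  · rw [huz] at h1; exact absurd h1.symm hzd
  · rw [hup] at h2
    rcases hWTT i z' q v v' with k1 | k2 | k3 | k4
    · rw [huz] at k1; exact absurd k1.symm hzd
    · rw [huq] at k2; rw [h2] at k2; exact absurd k2.symm hqp
    · rw [huq] at k3; exact absurd k3.symm hqd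
    · rw [huz] at k4; exact k4 ▸ hpq
  · rw [hup] at h3; exact absurd h3.symm hpd
  · rw [huz] at h4; exact h4.symm

/-- In a WTT game form every hyperplane either has a proper outcome (it strictly
dominates some distinct parallel hyperplane) or is a sink hyperplane (every
other parallel hyperplane dominates it). -/
theorem stmt11 {n : ℕ} {X : Fin n → Type*} {A : Type*}
    [∀ i, Fintype (X i)] [∀ i, Nonempty (X i)]
    (g : (∀ i, X i) → A) (hWTT : WTT g) (hdup : NoDuplicateHyperplanes g)
    (i : Fin n) (v : X i) :
    (∃ (v' : X i) (c : A), v' ≠ v ∧ StrictlyDominates g i v v' c) ∨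
    (∀ v' : X i, v' ≠ v → ∃ c, Dominates g i v' v c) := by
  by_cases hsink : ∀ v' : X i, v' ≠ v → ∃ c, Dominates g i v' v c
  · exact Or.inr hsink
  · left
    push_neg at hsink
    obtain ⟨v', hv', hnd⟩ := hsink
    obtain ⟨c, hc⟩ := key_dom g hWTT i v' v (not_exists.mpr hnd)
    exact ⟨v', c, hv', hc, not_exists.mpr hnd⟩
end

section
/- (Box induction.) Let g be an n-person no-sink WTT game form that contains a k-box for some 1 ≤ k ≤ n. Then g contains a (k−1)-box or a 1-box. -/
/-- `c` is a proper outcome of the hyperplane `{x | x i = v}`: the hyperplane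
strictly dominates some distinct parallel hyperplane by `c`. -/
def IsProperOutcome {n : ℕ} {X : Fin n → Type*} {A : Type*} (g : (∀ i, X i) → A)
    (i : Fin n) (v : X i) (c : A) : Prop :=
  ∃ v' : X i, v' ≠ v ∧ StrictlyDominates g i v v' c

/-- `g` is a no-sink game form: every hyperplane strictly dominates some
distinct parallel hyperplane. -/
def NoSink {n : ℕ} {X : Fin n → Type*} {A : Type*} (g : (∀ i, X i) → A) : Prop :=
  ∀ (i : Fin n) (v : X i), ∃ (v' : X i) (c : A), v' ≠ v ∧ StrictlyDominates g i v v' c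

open scoped Classical in
/-- `g` contains a `k`-box: two profiles `x`, `y` with different values,
differing in exactly `k` coordinates, such that in every differing direction
`g x` is not a proper outcome of the hyperplane through `x` and `g y` is not a
proper outcome of the hyperplane through `y`. -/
def ContainsKBox {n : ℕ} {X : Fin n → Type*} {A : Type*} (g : (∀ i, X i) → A)
    (k : ℕ) : Prop :=
  ∃ x y : ∀ i, X i, g x ≠ g y ∧
    (Finset.univ.filter fun i : Fin n => x i ≠ y i).card = k ∧
    ∀ i : Fin n, x i ≠ y i →
      (∀ c, IsProperOutcome g i (x i) c → g x ≠ c) ∧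
      (∀ c, IsProperOutcome g i (y i) c → g y ≠ c)

/-- Box induction: a no-sink WTT game form containing a `k`-box (1 ≤ k ≤ n)
contains a `(k-1)`-box or a `1`-box. -/
theorem stmt12 {n : ℕ} {X : Fin n → Type*} {A : Type*}
    [∀ i, Fintype (X i)] [∀ i, Nonempty (X i)]
    (g : (∀ i, X i) → A) (hWTT : WTT g)
    (hconst : NoConstantHyperplane g) (hdup : NoDuplicateHyperplanes g)
    (hns : NoSink g) (k : ℕ) (hk1 : 1 ≤ k) (hkn : k ≤ n)
    (hbox : ContainsKBox g k) :
    ContainsKBox g (k - 1) ∨ ContainsKBox g 1 := by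
  classical
  obtain ⟨x, y, hxy, hcard, hprop⟩ := hbox
  have hne : (Finset.univ.filter fun i : Fin n => x i ≠ y i).Nonempty := by
    rw [← Finset.card_pos, hcard]; omega
  obtain ⟨i, hi⟩ := hne
  have hxyi : x i ≠ y i := (Finset.mem_filter.mp hi).2
  set x' := Function.update x i (y i) with hx'def
  set y' := Function.update y i (x i) with hy'def
  have hx'i : x' i = y i := Function.update_self i (y i) x
  have hy'i : y' i = x i := Function.update_self i (x i) y
  have hx'j : ∀ j, j ≠ i → x' j = x j := fun j hj => Function.update_of_ne hj _ _
  have hy'j : ∀ j, j ≠ i → y' j = y j := fun j hj => Function.update_of_ne hj _ _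
  have filt1 : ∀ (a b : ∀ j, X j), (∀ j, j ≠ i → a j = b j) → a i ≠ b i →
      (Finset.univ.filter fun j => a j ≠ b j) = {i} := by
    intro a b hagree hne
    ext j
    simp only [Finset.mem_filter, Finset.mem_univ, true_and, Finset.mem_singleton]
    constructor
    · intro h; by_contra hj; exact h (hagree j hj)
    · rintro rfl; exact hne
  by_cases hA : g x' = g x
  · -- (k-1)-box (x', y)
    left
    have filter_x' : (Finset.univ.filter fun j => x' j ≠ y j) =
        (Finset.univ.filter fun j => x j ≠ y j).erase i := by
      ext j
      simp only [Finset.mem_filter, Finset.mem_erase, Finset.mem_univ, true_and]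
      constructor
      · intro h
        rcases eq_or_ne j i with rfl | hj
        · exact absurd hx'i h
        · exact ⟨hj, by rwa [hx'j j hj] at h⟩
      · rintro ⟨hj, h⟩; rwa [hx'j j hj]
    refine ⟨x', y, by rw [hA]; exact hxy, ?_, ?_⟩
    · rw [filter_x', Finset.card_erase_of_mem hi, hcard]
    · intro j hj
      have hji : j ≠ i := by rintro rfl; exact hj hx'i
      have hxj : x j ≠ y j := by rwa [hx'j j hji] at hj
      have hp := hprop j hxj
      refine ⟨?_, hp.2⟩
      intro c hc
      rw [hx'j j hji] at hc
      rw [hA]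
      exact hp.1 c hc
  by_cases hB : g y' = g y
  · -- (k-1)-box (x, y')
    left
    have filter_y' : (Finset.univ.filter fun j => x j ≠ y' j) =
        (Finset.univ.filter fun j => x j ≠ y j).erase i := by
      ext j
      simp only [Finset.mem_filter, Finset.mem_erase, Finset.mem_univ, true_and]
      constructor
      · intro h
        rcases eq_or_ne j i with rfl | hj
        · exact absurd hy'i.symm h
        · exact ⟨hj, by rwa [hy'j j hj] at h⟩
      · rintro ⟨hj, h⟩; rwa [hy'j j hj]
    refine ⟨x, y', by rw [hB]; exact hxy, ?_, ?_⟩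
    · rw [filter_y', Finset.card_erase_of_mem hi, hcard]
    · intro j hj
      have hji : j ≠ i := by rintro rfl; exact hj hy'i.symm
      have hyj : x j ≠ y j := by rwa [hy'j j hji] at hj
      have hp := hprop j hyj
      refine ⟨hp.1, ?_⟩
      intro c hc
      rw [hy'j j hji] at hc
      rw [hB]
      exact hp.2 c hc
  · -- WTT forces a 1-box
    right
    have hW := hWTT i x y (x i) (y i)
    rw [Function.update_eq_self, Function.update_eq_self] at hW
    rcases hW with h1 | h2 | h3 | h4
    · exact absurd h1.symm hA
    · -- g x = g y' : 1-box (y', y)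
      refine ⟨y', y, by rw [← h2]; exact hxy, ?_, ?_⟩
      · rw [filt1 y' y hy'j (by rw [hy'i]; exact hxyi)]
        exact Finset.card_singleton i
      · intro j hj
        have hji : j = i := by
          by_contra hji
          exact hj (hy'j j hji)
        subst hji
        have hp := hprop j hxyi
        refine ⟨?_, hp.2⟩
        intro c hc
        rw [hy'i] at hc
        rw [← h2]
        exact hp.1 c hc
    · exact absurd h3.symm hB
    · -- g y = g x' : 1-box (x, x')
      refine ⟨x, x', by rw [← h4]; exact hxy, ?_, ?_⟩
      · rw [filt1 x x' (fun j hj => (hx'j j hj).symm) (by rw [hx'i]; exact hxyi)]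
        exact Finset.card_singleton i
      · intro j hj
        have hji : j = i := by
          by_contra hji
          exact hj (hx'j j hji).symm
        subst hji
        have hp := hprop j hxyi
        refine ⟨hp.1, ?_⟩
        intro c hc
        rw [hx'i] at hc
        rw [← h4]
        exact hp.2 c hc
end

section
/- (No 1-box.) An n-person no-sink WTT game form contains no 1-box; that is, there are no two profiles x, y differing in exactly one coordinate i with g(x) ≠ g(y) such that g(x) is not the proper outcome of the hyperplane through x perpendicular to direction i and g(y) is not the proper outcome of the hyperplane through y perpendicular to direction i. -/
section Aux

variable {n : ℕ} {X : Fin n → Type*} {A : Type*}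

private lemma upd_self {i : Fin n} (z : ∀ j, X j) (a : X i) (h : z i = a) :
    Function.update z i a = z := by
  rw [← h]; exact Function.update_eq_self i z

/-- Dichotomy: if the line through `x` in direction `i` separates the hyperplanes
`{· i = x i}` and `{· i = w}`, then one of them dominates the other. -/
private lemma dicho (g : (∀ j, X j) → A) (hWTT : WTT g) (i : Fin n)
    (x : ∀ j, X j) (w : X i) (hxy : g x ≠ g (Function.update x i w)) :
    (∃ c, Dominates g i (x i) w c) ∨ ∃ d, Dominates g i w (x i) d := by
  by_contra h
  push_neg at h
  obtain ⟨h1, h2⟩ := h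
  have h1' := h1 (g x)
  unfold Dominates at h1'
  push_neg at h1'
  obtain ⟨s, hsi, hsd, hsx⟩ := h1'
  have hsw : g (Function.update s i w) = g (Function.update x i w) := by
    rcases hWTT i x s (x i) w with h | h | h | h
    · rw [Function.update_eq_self] at h; exact absurd h hxy
    · rw [Function.update_eq_self, upd_self s (x i) hsi] at h; exact absurd h.symm hsx
    · rw [upd_self s (x i) hsi] at h; exact absurd h.symm hsd
    · exact h
  apply h2 (g (Function.update x i w))
  intro t hti htd
  rcases hWTT i t x w (x i) with h | h | h | h
  · rw [upd_self t w hti] at h; exact absurd h htd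
  · rw [upd_self t w hti] at h; exact h
  · rw [Function.update_eq_self] at h; exact absurd h hxy
  · rw [Function.update_eq_self] at h
    rcases hWTT i t s w (x i) with h' | h' | h' | h'
    · rw [upd_self t w hti] at h'; exact absurd h' htd
    · rw [upd_self t w hti] at h'; exact h'.trans hsw
    · rw [upd_self s (x i) hsi] at h'; exact absurd h' hsd
    · rw [upd_self s (x i) hsi] at h'; exact absurd (h.trans h'.symm) (Ne.symm hsx)

/-- Key lemma: the configuration of a `1`-box in which the hyperplane through `x`
dominates the hyperplane through `y = update x i w` is contradictory. -/
private lemma key (g : (∀ j, X j) → A) (hWTT : WTT g) (i : Fin n)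
    (x : ∀ j, X j) (w : X i)
    (hxy : g x ≠ g (Function.update x i w))
    (v'' : X i) (c' : A) (hsd : StrictlyDominates g i (x i) v'' c')
    (u : X i) (e' : A) (hsd' : StrictlyDominates g i w u e')
    (hbox1 : g x ≠ c') (hbox2 : g (Function.update x i w) ≠ e')
    (c : A) (hdomvw : Dominates g i (x i) w c) : False := by
  classical
  -- counterexamples on hyperplane `v''` witnessing that it does not dominate `x i`
  have hex : ∀ d : A, ∃ z, z i = v'' ∧ g z ≠ g (Function.update z i (x i)) ∧ g z ≠ d := by
    intro d
    by_contra hcon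
    push_neg at hcon
    exact hsd.2 ⟨d, hcon⟩
  obtain ⟨z₁, hz₁i, hz₁d, hz₁x⟩ := hex (g x)
  obtain ⟨z₂, hz₂i, hz₂d, hz₂₁⟩ := hex (g z₁)
  -- values of the `z`'s shifted to the hyperplane `x i`
  have hzv : ∀ z, z i = v'' → g z ≠ g (Function.update z i (x i)) →
      g (Function.update z i (x i)) = c' := by
    intro z hzi hzd
    apply hsd.1 (Function.update z i (x i)) (Function.update_self i (x i) z)
    rw [Function.update_idem, upd_self z v'' hzi]
    exact Ne.symm hzd
  have hz₁v : g (Function.update z₁ i (x i)) = c' := hzv z₁ hz₁i hz₁d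
  have hz₂v : g (Function.update z₂ i (x i)) = c' := hzv z₂ hz₂i hz₂d
  have hz₁c' : g z₁ ≠ c' := by rw [← hz₁v]; exact hz₁d
  have hz₂c' : g z₂ ≠ c' := by rw [← hz₂v]; exact hz₂d
  -- `g x = c`
  have hgxc : g x = c := hdomvw x rfl hxy
  -- values of the `z`'s shifted to the hyperplane `w`
  have hzw : ∀ z, z i = v'' → g (Function.update z i (x i)) = c' →
      g (Function.update z i w) = c' := by
    intro z hzi hzv'
    have heq : g (Function.update z i (x i)) = g (Function.update z i w) := by
      by_contra hne
      have := hdomvw (Function.update z i (x i)) (Function.update_self i (x i) z)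
        (by rwa [Function.update_idem])
      rw [hzv'] at this
      exact hbox1 (hgxc.trans this.symm)
    exact heq.symm.trans hzv'
  have hz₁w : g (Function.update z₁ i w) = c' := hzw z₁ hz₁i hz₁v
  have hz₂w : g (Function.update z₂ i w) = c' := hzw z₂ hz₂i hz₂v
  -- F1: `x` is not a differing point w.r.t. `v''`
  have hxv'' : g x = g (Function.update x i v'') := by
    have keyj : ∀ z, z i = v'' → g (Function.update z i (x i)) = c' → g z ≠ c' →
        g x = g (Function.update x i v'') ∨ g z = g (Function.update x i v'') := by
      intro z hzi hzc hzc'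
      rcases hWTT i x z (x i) v'' with h | h | h | h
      · rw [Function.update_eq_self] at h; exact Or.inl h
      · rw [Function.update_eq_self, hzc] at h; exact absurd h hbox1
      · rw [upd_self z v'' hzi, hzc] at h; exact absurd h hzc'
      · rw [upd_self z v'' hzi] at h; exact Or.inr h
    rcases keyj z₁ hz₁i hz₁v hz₁c' with h1 | h1
    · exact h1
    rcases keyj z₂ hz₂i hz₂v hz₂c' with h2 | h2
    · exact h2
    exact absurd (h2.trans h1.symm) hz₂₁
  -- F3: `g y = c'`
  have hyc' : g (Function.update x i w) = c' := by
    rcases hWTT i x z₁ w v'' with h | h | h | h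
    · rw [← hxv''] at h; exact absurd h.symm hxy
    · exact h.trans hz₁w
    · rw [upd_self z₁ v'' hz₁i, hz₁w] at h; exact absurd h hz₁c'
    · rw [upd_self z₁ v'' hz₁i, ← hxv''] at h; exact absurd h hz₁x
  have hc'e' : c' ≠ e' := fun h => hbox2 (hyc'.trans h)
  -- counterexamples on hyperplane `u` witnessing that it does not dominate `w`
  have hex' : ∀ d : A, ∃ q, q i = u ∧ g q ≠ g (Function.update q i w) ∧ g q ≠ d := by
    intro d
    by_contra hcon
    push_neg at hcon
    exact hsd'.2 ⟨d, hcon⟩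
  obtain ⟨q₁, hq₁i, hq₁d, -⟩ := hex' (g x)
  obtain ⟨q₂, hq₂i, hq₂d, hq₂₁⟩ := hex' (g q₁)
  have hqw : ∀ q, q i = u → g q ≠ g (Function.update q i w) →
      g (Function.update q i w) = e' := by
    intro q hqi hqd
    apply hsd'.1 (Function.update q i w) (Function.update_self i w q)
    rw [Function.update_idem, upd_self q u hqi]
    exact Ne.symm hqd
  have hq₁w : g (Function.update q₁ i w) = e' := hqw q₁ hq₁i hq₁d
  have hq₂w : g (Function.update q₂ i w) = e' := hqw q₂ hq₂i hq₂d
  have hq₁e : g q₁ ≠ e' := by rw [← hq₁w]; exact hq₁d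
  have hq₂e : g q₂ ≠ e' := by rw [← hq₂w]; exact hq₂d
  -- values of the `z`'s shifted to the hyperplane `u`
  have hzu : ∀ z, z i = v'' → g (Function.update z i w) = c' →
      g (Function.update z i u) = c' := by
    intro z hzi hzw'
    have heq : g (Function.update z i w) = g (Function.update z i u) := by
      by_contra hne
      have := hsd'.1 (Function.update z i w) (Function.update_self i w z)
        (by rwa [Function.update_idem])
      rw [hzw'] at this
      exact hc'e' this
    exact heq.symm.trans hzw'
  have hz₁u : g (Function.update z₁ i u) = c' := hzu z₁ hz₁i hz₁w
  have hz₂u : g (Function.update z₂ i u) = c' := hzu z₂ hz₂i hz₂w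
  -- values of the `q`'s shifted to the hyperplane `v''`
  have hqv'' : ∀ q, q i = u → g (Function.update q i w) = e' →
      g (Function.update q i v'') = e' := by
    intro q hqi hqw'
    have keyk : ∀ z, z i = v'' → g z ≠ c' → g (Function.update z i w) = c' →
        g (Function.update q i v'') = e' ∨ g (Function.update q i v'') = g z := by
      intro z hzi hzc hzw'
      rcases hWTT i z q v'' w with h | h | h | h
      · rw [upd_self z v'' hzi, hzw'] at h; exact absurd h hzc
      · rw [upd_self z v'' hzi] at h; exact Or.inr h.symm
      · rw [hqw'] at h; exact Or.inl h.symm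
      · rw [hqw', hzw'] at h; exact absurd h.symm hc'e'
    rcases keyk z₁ hz₁i hz₁c' hz₁w with h1 | h1
    · exact h1
    rcases keyk z₂ hz₂i hz₂c' hz₂w with h2 | h2
    · exact h2
    exact absurd (h2.symm.trans h1) hz₂₁
  have hq₁v'' : g (Function.update q₁ i v'') = e' := hqv'' q₁ hq₁i hq₁w
  have hq₂v'' : g (Function.update q₂ i v'') = e' := hqv'' q₂ hq₂i hq₂w
  -- pick a `z` whose value differs from `e'`
  obtain ⟨z₀, hz₀i, hz₀c', hz₀u, hz₀e⟩ :
      ∃ z, z i = v'' ∧ g z ≠ c' ∧ g (Function.update z i u) = c' ∧ g z ≠ e' := by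
    by_cases h : g z₁ = e'
    · exact ⟨z₂, hz₂i, hz₂c', hz₂u, fun he => hz₂₁ (he.trans h.symm)⟩
    · exact ⟨z₁, hz₁i, hz₁c', hz₁u, h⟩
  -- final contradiction
  have hq : ∀ q, q i = u → g q ≠ e' → g (Function.update q i v'') = e' → g q = c' := by
    intro q hqi hqe hqv
    rcases hWTT i q z₀ u v'' with h | h | h | h
    · rw [upd_self q u hqi, hqv] at h; exact absurd h hqe
    · rw [upd_self q u hqi, hz₀u] at h; exact h
    · rw [upd_self z₀ v'' hz₀i, hz₀u] at h; exact absurd h hz₀c'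
    · rw [upd_self z₀ v'' hz₀i, hqv] at h; exact absurd h hz₀e
  exact hq₂₁ ((hq q₂ hq₂i hq₂e hq₂v'').trans (hq q₁ hq₁i hq₁e hq₁v'').symm)

end Aux

/-- A no-sink WTT game form contains no `1`-box. -/
theorem stmt13 {n : ℕ} {X : Fin n → Type*} {A : Type*}
    [∀ i, Fintype (X i)] [∀ i, Nonempty (X i)]
    (g : (∀ i, X i) → A) (hWTT : WTT g)
    (hconst : NoConstantHyperplane g) (hdup : NoDuplicateHyperplanes g)
    (hns : NoSink g) :
    ¬ ContainsKBox g 1 := by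
  classical
  rintro ⟨x, y, hxy, hcard, hbox⟩
  obtain ⟨i, hi⟩ := Finset.card_eq_one.mp hcard
  have hix : x i ≠ y i := by
    have hmem : i ∈ Finset.univ.filter fun j : Fin n => x j ≠ y j := by
      rw [hi]; exact Finset.mem_singleton_self i
    exact (Finset.mem_filter.mp hmem).2
  have hagree : ∀ j, j ≠ i → x j = y j := by
    intro j hj
    by_contra hne
    have hmem : j ∈ Finset.univ.filter fun j : Fin n => x j ≠ y j :=
      Finset.mem_filter.mpr ⟨Finset.mem_univ j, hne⟩
    rw [hi] at hmem
    exact hj (Finset.mem_singleton.mp hmem)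
  have hy : y = Function.update x i (y i) := by
    funext j
    by_cases hji : j = i
    · subst hji; rw [Function.update_self]
    · rw [Function.update_of_ne hji]; exact (hagree j hji).symm
  have hx : x = Function.update y i (x i) := by
    funext j
    by_cases hji : j = i
    · subst hji; rw [Function.update_self]
    · rw [Function.update_of_ne hji]; exact hagree j hji
  obtain ⟨hb1, hb2⟩ := hbox i hix
  obtain ⟨v'', c', hv''ne, hsdx⟩ := hns i (x i)
  obtain ⟨u, e', hune, hsdy⟩ := hns i (y i)
  have hbx : g x ≠ c' := hb1 c' ⟨v'', hv''ne, hsdx⟩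
  have hby : g y ≠ e' := hb2 e' ⟨u, hune, hsdy⟩
  have hxy' : g x ≠ g (Function.update x i (y i)) := by rw [← hy]; exact hxy
  have hxy'' : g y ≠ g (Function.update y i (x i)) := by rw [← hx]; exact hxy.symm
  rcases dicho g hWTT i x (y i) hxy' with ⟨c, hc⟩ | ⟨d, hd⟩
  · exact key g hWTT i x (y i) hxy' v'' c' hsdx u e' hsdy hbx
      (by rw [← hy]; exact hby) c hc
  · exact key g hWTT i y (x i) hxy'' u e' hsdy v'' c' hsdx hby
      (by rw [← hx]; exact hbx) d hd
end

section
/- (No k-box.) An n-person no-sink WTT game form contains no k-box for any 1 ≤ k ≤ n. -/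
section Aux

variable {n : ℕ} {X : Fin n → Type*} {A : Type*}

/-- Dichotomy: for any two parallel hyperplanes, one dominates the other. -/
lemma wtt_dichotomy [∀ i, Nonempty (X i)] (g : (∀ i, X i) → A) (hWTT : WTT g)
    (i : Fin n) (v w : X i) :
    (∃ c, Dominates g i v w c) ∨ (∃ d, Dominates g i w v d) := by
  classical
  by_cases h0 : ∃ x : ∀ j, X j, x i = v ∧ g x ≠ g (Function.update x i w)
  case neg =>
    exact Or.inl ⟨g (fun j => Classical.arbitrary (X j)),
      fun z hz hz' => (h0 ⟨z, hz, hz'⟩).elim⟩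
  · obtain ⟨x0, hx0v, hx0⟩ := h0
    by_cases h1 : ∀ x1 : ∀ j, X j, x1 i = v → g x1 ≠ g (Function.update x1 i w) → g x1 = g x0
    · exact Or.inl ⟨g x0, fun z hz hz' => h1 z hz hz'⟩
    · push_neg at h1
      obtain ⟨x1, hx1v, hx1, hne⟩ := h1
      have hupd0 : Function.update x0 i v = x0 := by
        rw [← hx0v]; exact Function.update_eq_self i x0
      have hupd1 : Function.update x1 i v = x1 := by
        rw [← hx1v]; exact Function.update_eq_self i x1
      have hww : g (Function.update x1 i w) = g (Function.update x0 i w) := by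
        rcases hWTT i x0 x1 v w with h | h | h | h
        · rw [hupd0] at h; exact absurd h hx0
        · rw [hupd0, hupd1] at h; exact absurd h.symm hne
        · rw [hupd1] at h; exact absurd h.symm hx1
        · exact h
      refine Or.inr ⟨g (Function.update x0 i w), fun z hz hz' => ?_⟩
      have hz2 : Function.update z i w = z := by
        rw [← hz]; exact Function.update_eq_self i z
      have H0 := hWTT i z x0 v w
      have H1 := hWTT i z x1 v w
      rw [hz2, hupd0] at H0
      rw [hz2, hupd1] at H1
      rcases H0 with h | h | h | h
      · exact absurd h.symm hz'
      · rcases H1 with h' | h' | h' | h'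
        · exact absurd h'.symm hz'
        · exact absurd (h.symm.trans h') hne.symm
        · exact absurd h'.symm hx1
        · exact h'.symm.trans hww
      · exact absurd h.symm hx0
      · exact h.symm

/-- No 1-box. -/
lemma no_one_box [∀ i, Nonempty (X i)] (g : (∀ i, X i) → A) (hWTT : WTT g)
    (hns : NoSink g) (i : Fin n) (x : ∀ j, X j) (w : X i) (hvw : x i ≠ w)
    (hg : g x ≠ g (Function.update x i w))
    (hbx : ∀ c, IsProperOutcome g i (x i) c → g x ≠ c)
    (hby : ∀ c, IsProperOutcome g i w c → g (Function.update x i w) ≠ c) :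
    False := by
  classical
  set y := Function.update x i w with hy
  have hyi : y i = w := Function.update_self i w x
  have hyv : Function.update y i (x i) = x := by
    rw [hy, Function.update_idem, Function.update_eq_self]
  by_cases hVW : ∃ c, Dominates g i (x i) w c
  · obtain ⟨c, hc⟩ := hVW
    have hgx : g x = c := hc x rfl hg
    by_cases hWV : ∃ d, Dominates g i w (x i) d
    · obtain ⟨d, hd⟩ := hWV
      have hgy : g y = d := hd y hyi (by rw [hyv]; exact fun h => hg h.symm)
      obtain ⟨u, e, hune, hDvu, hnDuv⟩ := hns i (x i)
      have hce : g x ≠ e := hbx e ⟨u, hune, hDvu, hnDuv⟩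
      have hce' : c ≠ e := by rw [← hgx]; exact hce
      have huw : u ≠ w := by
        intro h; subst h; exact hnDuv ⟨d, hd⟩
      have hxu : g (Function.update x i u) = g x := by
        by_contra h
        exact hce (hDvu x rfl fun h' => h h'.symm)
      have hxuw : Function.update (Function.update x i u) i w = y := by
        rw [Function.update_idem]
      have hxu_mem : g (Function.update x i u) ≠
          g (Function.update (Function.update x i u) i w) := by
        rw [hxuw, hxu]; exact hg
      have huwkey : Dominates g i u w (g x) := by
        have getc : (∃ c₁, Dominates g i u w c₁) → Dominates g i u w (g x) := by
          rintro ⟨c₁, h₁⟩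
          have : c₁ = g x := by
            have := h₁ (Function.update x i u) (Function.update_self i u x) hxu_mem
            rw [hxu] at this; exact this.symm
          rwa [this] at h₁
        rcases wtt_dichotomy g hWTT i u w with h₁ | ⟨d₁, h₁⟩
        · exact getc h₁
        · by_cases hUW : ∃ c₁, Dominates g i u w c₁
          · exact getc hUW
          · exfalso
            have hyu : g y ≠ g (Function.update y i u) := by
              have heq : Function.update y i u = Function.update x i u := by
                rw [hy, Function.update_idem]
              rw [heq, hxu]; exact fun h => hg h.symm
            have hd₁ : d₁ = g y := (h₁ y hyi hyu).symm
            have hprop : IsProperOutcome g i w (g y) :=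
              ⟨u, huw, hd₁ ▸ h₁, hUW⟩
            exact hby (g y) hprop rfl
      have hfinal : Dominates g i u (x i) (g x) := by
        intro z hz hz'
        have hzvi : (Function.update z i (x i)) i = x i := Function.update_self i (x i) z
        have back : Function.update (Function.update z i (x i)) i u = z := by
          rw [Function.update_idem, ← hz]; exact Function.update_eq_self i z
        have hgzv : g (Function.update z i (x i)) = e :=
          hDvu (Function.update z i (x i)) hzvi (by rw [back]; exact fun h => hz' h.symm)
        have hidem : Function.update (Function.update z i (x i)) i w =
            Function.update z i w := Function.update_idem (x i) w z
        have hzw : g (Function.update z i w) = e := by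
          by_contra h
          have h2 : g (Function.update z i (x i)) ≠
              g (Function.update (Function.update z i (x i)) i w) := by
            rw [hidem, hgzv]; exact fun heq => h heq.symm
          have := hc (Function.update z i (x i)) hzvi h2
          rw [hgzv] at this
          exact hce' this.symm
        refine huwkey z hz ?_
        rw [hzw]
        exact fun h => hz' (h.trans hgzv.symm)
      exact hnDuv ⟨g x, hfinal⟩
    · exact hbx c ⟨w, Ne.symm hvw, hc, hWV⟩ hgx
  · obtain ⟨d, hd⟩ := (wtt_dichotomy g hWTT i (x i) w).resolve_left hVW
    have hgy : g y = d := hd y hyi (by rw [hyv]; exact fun h => hg h.symm)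
    have hprop : IsProperOutcome g i w (g y) := ⟨x i, hvw, hgy ▸ hd, hVW⟩
    exact hby (g y) hprop rfl

end Aux

/-- A no-sink WTT game form contains no `k`-box for any 1 ≤ k ≤ n. -/
theorem stmt14 {n : ℕ} {X : Fin n → Type*} {A : Type*}
    [∀ i, Fintype (X i)] [∀ i, Nonempty (X i)]
    (g : (∀ i, X i) → A) (hWTT : WTT g)
    (hconst : NoConstantHyperplane g) (hdup : NoDuplicateHyperplanes g)
    (hns : NoSink g) (k : ℕ) (hk1 : 1 ≤ k) (hkn : k ≤ n) :
    ¬ ContainsKBox g k := by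
  classical
  have key : ∀ k, ¬ ContainsKBox g k := by
    intro k
    induction k using Nat.strong_induction_on with
    | _ k ih =>
      rintro ⟨x, y, hg, hcard, hcond⟩
      by_cases hS : (Finset.univ.filter fun i : Fin n => x i ≠ y i) = ∅
      · refine hg ?_
        have hxy : x = y := funext fun j => by
          by_contra hne
          have hj : j ∈ Finset.univ.filter fun i : Fin n => x i ≠ y i :=
            Finset.mem_filter.mpr ⟨Finset.mem_univ j, hne⟩
          rw [hS] at hj
          exact absurd hj (Finset.notMem_empty j)
        rw [hxy]
      · obtain ⟨i, hi⟩ := Finset.nonempty_iff_ne_empty.mpr hS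
        have hxyi : x i ≠ y i := (Finset.mem_filter.mp hi).2
        have hk0 : k ≠ 0 := by
          rintro rfl
          rw [Finset.card_eq_zero] at hcard
          exact hS hcard
        have hupdx : Function.update x i (x i) = x := Function.update_eq_self i x
        have hupdy : Function.update y i (y i) = y := Function.update_eq_self i y
        rcases hWTT i x y (x i) (y i) with h | h | h | h
        · -- g x = g (update x i (y i)) : reduce to a (k-1)-box (z, y)
          rw [hupdx] at h
          refine ih (k - 1) (Nat.sub_lt (Nat.pos_of_ne_zero hk0) one_pos) ?_
          refine ⟨Function.update x i (y i), y, fun hEq => hg (h.trans hEq), ?_, ?_⟩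
          · have hset : (Finset.univ.filter fun j : Fin n =>
                Function.update x i (y i) j ≠ y j) =
                (Finset.univ.filter fun j : Fin n => x j ≠ y j).erase i := by
              ext j
              simp only [Finset.mem_filter, Finset.mem_univ, true_and, Finset.mem_erase]
              by_cases hj : j = i
              · subst hj
                simp [Function.update_self]
              · simp [Function.update_of_ne hj, hj]
            rw [hset, Finset.card_erase_of_mem hi, hcard]
          · intro j hj
            have hji : j ≠ i := by
              intro hEq; subst hEq
              exact hj (Function.update_self j (y j) x)
            have hxj : x j ≠ y j := by rwa [Function.update_of_ne hji] at hj
            obtain ⟨h1, h2⟩ := hcond j hxj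
            refine ⟨fun c hc hEq => ?_, h2⟩
            rw [Function.update_of_ne hji] at hc
            exact h1 c hc (h.trans hEq)
        · -- g x = g (update y i (x i)) : 1-box (update y i (x i), y)
          rw [hupdx] at h
          have hzy : Function.update (Function.update y i (x i)) i (y i) = y := by
            rw [Function.update_idem]; exact Function.update_eq_self i y
          refine no_one_box g hWTT hns i (Function.update y i (x i)) (y i)
            (by rw [Function.update_self]; exact hxyi)
            (by rw [hzy]; exact fun hEq => hg (h.trans hEq)) ?_ ?_
          · intro c hc hEq
            rw [Function.update_self] at hc
            exact (hcond i hxyi).1 c hc (h.trans hEq)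
          · rw [hzy]
            exact (hcond i hxyi).2
        · -- g y = g (update y i (x i)) : reduce to a (k-1)-box (x, update y i (x i))
          rw [hupdy] at h
          refine ih (k - 1) (Nat.sub_lt (Nat.pos_of_ne_zero hk0) one_pos) ?_
          refine ⟨x, Function.update y i (x i), fun hEq => hg (hEq.trans h.symm), ?_, ?_⟩
          · have hset : (Finset.univ.filter fun j : Fin n =>
                x j ≠ Function.update y i (x i) j) =
                (Finset.univ.filter fun j : Fin n => x j ≠ y j).erase i := by
              ext j
              simp only [Finset.mem_filter, Finset.mem_univ, true_and, Finset.mem_erase]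
              by_cases hj : j = i
              · subst hj
                simp [Function.update_self]
              · simp [Function.update_of_ne hj, hj]
            rw [hset, Finset.card_erase_of_mem hi, hcard]
          · intro j hj
            have hji : j ≠ i := by
              intro hEq; subst hEq
              exact hj (Function.update_self j (x j) y).symm
            have hxj : x j ≠ y j := by rwa [Function.update_of_ne hji] at hj
            obtain ⟨h1, h2⟩ := hcond j hxj
            refine ⟨h1, fun c hc hEq => ?_⟩
            rw [Function.update_of_ne hji] at hc
            exact h2 c hc (h.trans hEq)
        · -- g y = g (update x i (y i)) : 1-box (x, update x i (y i))
          rw [hupdy] at h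
          refine no_one_box g hWTT hns i x (y i) hxyi
            (fun hEq => hg (hEq.trans h.symm)) (hcond i hxyi).1 ?_
          intro c hc hEq
          exact (hcond i hxyi).2 c hc (h.trans hEq)
  exact key k
end

section
/- (No-sink case.) Every n-person no-sink WTT game form is separable: assigning its proper outcome to each hyperplane perpendicular to the first n−1 directions, every hyperplane perpendicular to direction n has all its uncovered profiles carrying a single common outcome, and assigning that outcome yields a feasible assignment. -/
section AuxLemmas

variable {n : ℕ} {X : Fin n → Type*} {A : Type*}

private lemma upd_upd (x : ∀ j, X j) (i : Fin n) (a b : X i) :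
    Function.update (Function.update x i a) i b = Function.update x i b :=
  Function.update_idem ..

/-- The one-box lemma: two profiles differing only in coordinate `i`, each of
whose value avoids every proper outcome of the hyperplane through it in
direction `i`, carry the same value. -/
private lemma oneBox (g : (∀ i, X i) → A) (hWTT : WTT g) (hns : NoSink g)
    (i : Fin n) (p : ∀ j, X j) (t : X i)
    (hA : ∀ c, IsProperOutcome g i (p i) c → g p ≠ c)
    (hB : ∀ c, IsProperOutcome g i t c → g (Function.update p i t) ≠ c) :
    g p = g (Function.update p i t) := by
  by_contra hab
  obtain ⟨s', c, hs's, hsd⟩ := hns i (p i)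
  have hac : g p ≠ c := hA c ⟨s', hs's, hsd⟩
  obtain ⟨t', d, ht't, htd⟩ := hns i t
  have hbd : g (Function.update p i t) ≠ d := hB d ⟨t', ht't, htd⟩
  have hps : Function.update p i (p i) = p := Function.update_eq_self ..
  -- value at s' along the line of p
  have hPs' : g (Function.update p i s') = g p := by
    by_contra h
    exact hac (hsd.1 p rfl (fun h' => h h'.symm))
  -- value at t' along the line of p
  have hQt' : g (Function.update p i t') = g (Function.update p i t) := by
    by_contra h
    refine hbd (htd.1 (Function.update p i t) (Function.update_self ..) ?_)
    rw [upd_upd]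
    exact fun h' => h h'.symm
  -- witness on the hyperplane s'
  obtain ⟨z, hzi, hz1, hza⟩ :
      ∃ z : ∀ j, X j, z i = s' ∧ g z ≠ g (Function.update z i (p i)) ∧ g z ≠ g p := by
    have h : ¬ Dominates g i s' (p i) (g p) := fun h => hsd.2 ⟨_, h⟩
    unfold Dominates at h
    push_neg at h
    obtain ⟨z, h1, h2, h3⟩ := h
    exact ⟨z, h1, h2, h3⟩
  have hzz : Function.update z i s' = z := by rw [← hzi]; exact Function.update_eq_self ..
  have hzs : g (Function.update z i (p i)) = c := by
    refine hsd.1 _ (Function.update_self ..) ?_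
    rw [upd_upd, hzz]
    exact fun h' => hz1 h'.symm
  have hzc : g z ≠ c := by rw [← hzs]; exact hz1
  -- witness on the hyperplane t'
  obtain ⟨u, hui, hu1, hub⟩ :
      ∃ u : ∀ j, X j, u i = t' ∧ g u ≠ g (Function.update u i t) ∧
        g u ≠ g (Function.update p i t) := by
    have h : ¬ Dominates g i t' t (g (Function.update p i t)) := fun h => htd.2 ⟨_, h⟩
    unfold Dominates at h
    push_neg at h
    obtain ⟨u, h1, h2, h3⟩ := h
    exact ⟨u, h1, h2, h3⟩
  have huu : Function.update u i t' = u := by rw [← hui]; exact Function.update_eq_self ..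
  have hut : g (Function.update u i t) = d := by
    refine htd.1 _ (Function.update_self ..) ?_
    rw [upd_upd, huu]
    exact fun h' => hu1 h'.symm
  have hud : g u ≠ d := by rw [← hut]; exact hu1
  -- row z values at t and t'
  have hZt : g (Function.update z i t) = g (Function.update p i t) := by
    have h1 := hWTT i p z (p i) t
    have h2 := hWTT i p z s' t
    rw [hps, hzs] at h1
    rw [hPs', hzz] at h2
    rcases h1 with h | h | h | h
    · exact absurd h hab
    · exact absurd h hac
    · rcases h2 with h' | h' | h' | h'
      · exact absurd h' hab
      · exact absurd h'.symm hza
      · exact absurd (h'.symm.trans h) hzc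
      · exact h'
    · exact h
  have hZt' : g (Function.update z i t') = g (Function.update p i t) := by
    have h1 := hWTT i p z (p i) t'
    have h2 := hWTT i p z s' t'
    rw [hps, hzs, hQt'] at h1
    rw [hPs', hzz, hQt'] at h2
    rcases h1 with h | h | h | h
    · exact absurd h hab
    · exact absurd h hac
    · rcases h2 with h' | h' | h' | h'
      · exact absurd h' hab
      · exact absurd h'.symm hza
      · exact absurd (h'.symm.trans h) hzc
      · exact h'
    · exact h
  -- row u values at p i and s'
  have hUs : g (Function.update u i (p i)) = g p := by
    have h1 := hWTT i p u (p i) t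
    have h2 := hWTT i p u (p i) t'
    rw [hps, hut] at h1
    rw [hps, huu, hQt'] at h2
    rcases h1 with h | h | h | h
    · exact absurd h hab
    · exact h.symm
    · rcases h2 with h' | h' | h' | h'
      · exact absurd h' hab
      · exact h'.symm
      · exact absurd (h'.trans h.symm) hud
      · exact absurd h' hub
    · exact absurd h hbd.symm
  have hUs' : g (Function.update u i s') = g p := by
    have h1 := hWTT i p u s' t
    have h2 := hWTT i p u s' t'
    rw [hPs', hut] at h1
    rw [hPs', huu, hQt'] at h2
    rcases h1 with h | h | h | h
    · exact absurd h hab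
    · exact h.symm
    · rcases h2 with h' | h' | h' | h'
      · exact absurd h' hab
      · exact h'.symm
      · exact absurd (h'.trans h.symm) hud
      · exact absurd h' hub
    · exact absurd h hbd.symm
  -- the four crossing constraints
  have hα : c = g (Function.update p i t) ∨ d = g p := by
    have h := hWTT i z u (p i) t
    rw [hzs, hZt, hut, hUs] at h
    rcases h with h | h | h | h
    · exact Or.inl h
    · exact absurd h.symm hac
    · exact Or.inr h
    · exact absurd h hbd.symm
  have hβ : c = g (Function.update p i t) ∨ g u = g p := by
    have h := hWTT i z u (p i) t'
    rw [hzs, hZt', huu, hUs] at h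
    rcases h with h | h | h | h
    · exact Or.inl h
    · exact absurd h.symm hac
    · exact Or.inr h
    · exact absurd h hub
  have hγ : g z = g (Function.update p i t) ∨ d = g p := by
    have h := hWTT i z u s' t
    rw [hzz, hZt, hut, hUs'] at h
    rcases h with h | h | h | h
    · exact Or.inl h
    · exact absurd h hza
    · exact Or.inr h
    · exact absurd h hbd.symm
  have hδ : g z = g (Function.update p i t) ∨ g u = g p := by
    have h := hWTT i z u s' t'
    rw [hzz, hZt', huu, hUs'] at h
    rcases h with h | h | h | h
    · exact Or.inl h
    · exact absurd h hza
    · exact Or.inr h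
    · exact absurd h hub
  rcases hα with hα | hα
  · have hgz : g z ≠ g (Function.update p i t) := fun h => hzc (h.trans hα.symm)
    have hda : d = g p := hγ.resolve_left hgz
    have hgu : g u ≠ g p := fun h => hud (h.trans hda.symm)
    exact hgu (hδ.resolve_left hgz)
  · have hgu : g u ≠ g p := fun h => hud (h.trans hα.symm)
    have hcb : c = g (Function.update p i t) := hβ.resolve_right hgu
    have hgz : g z ≠ g (Function.update p i t) := fun h => hzc (h.trans hcb.symm)
    exact hgu (hδ.resolve_left hgz)

/-- Uniqueness of proper outcomes. -/
private lemma proper_unique (g : (∀ i, X i) → A) (hWTT : WTT g)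
    (hdup : NoDuplicateHyperplanes g) (i : Fin n) (v : X i) {c₁ c₂ : A}
    (h1 : IsProperOutcome g i v c₁) (h2 : IsProperOutcome g i v c₂) : c₁ = c₂ := by
  obtain ⟨v₁, hv₁, hd₁, hnd₁⟩ := h1
  obtain ⟨v₂, hv₂, hd₂, hnd₂⟩ := h2
  by_cases hvv : v₁ = v₂
  · subst hvv
    obtain ⟨x, hx, hxx⟩ := hdup i v v₁ (Ne.symm hv₁)
    exact (hd₁ x hx hxx).symm.trans (hd₂ x hx hxx)
  · by_contra hcc
    -- witness on v₁
    obtain ⟨z, hzi, hz1, hz2⟩ :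
        ∃ z : ∀ j, X j, z i = v₁ ∧ g z ≠ g (Function.update z i v) ∧ g z ≠ c₂ := by
      have h : ¬ Dominates g i v₁ v c₂ := fun h => hnd₁ ⟨_, h⟩
      unfold Dominates at h
      push_neg at h
      obtain ⟨z, ha, hb, hc⟩ := h
      exact ⟨z, ha, hb, hc⟩
    have hzz : Function.update z i v₁ = z := by rw [← hzi]; exact Function.update_eq_self ..
    have hzv : g (Function.update z i v) = c₁ := by
      refine hd₁ _ (Function.update_self ..) ?_
      rw [upd_upd, hzz]
      exact fun h => hz1 h.symm
    have hzc₁ : g z ≠ c₁ := by rw [← hzv]; exact hz1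
    have hzv₂ : g (Function.update z i v₂) = c₁ := by
      have heq : g (Function.update z i v) = g (Function.update (Function.update z i v) i v₂) := by
        by_contra h
        exact hcc ((hzv.symm.trans (hd₂ _ (Function.update_self ..) h)))
      rw [upd_upd] at heq
      rw [← heq, hzv]
    -- witness on v₂
    obtain ⟨u, hui, hu1, hu2⟩ :
        ∃ u : ∀ j, X j, u i = v₂ ∧ g u ≠ g (Function.update u i v) ∧ g u ≠ c₁ := by
      have h : ¬ Dominates g i v₂ v c₁ := fun h => hnd₂ ⟨_, h⟩
      unfold Dominates at h
      push_neg at h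
      obtain ⟨u, ha, hb, hc⟩ := h
      exact ⟨u, ha, hb, hc⟩
    have huu : Function.update u i v₂ = u := by rw [← hui]; exact Function.update_eq_self ..
    have huv : g (Function.update u i v) = c₂ := by
      refine hd₂ _ (Function.update_self ..) ?_
      rw [upd_upd, huu]
      exact fun h => hu1 h.symm
    have huc₂ : g u ≠ c₂ := by rw [← huv]; exact hu1
    have huv₁ : g (Function.update u i v₁) = c₂ := by
      have heq : g (Function.update u i v) = g (Function.update (Function.update u i v) i v₁) := by
        by_contra h
        exact hcc ((huv.symm.trans (hd₁ _ (Function.update_self ..) h))).symm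
      rw [upd_upd] at heq
      rw [← heq, huv]
    have h := hWTT i z u v₁ v₂
    rw [hzz, huu, hzv₂, huv₁] at h
    rcases h with h | h | h | h
    · exact hzc₁ h
    · exact hz2 h
    · exact huc₂ h
    · exact hu2 h

open scoped Classical in
/-- The main induction: two profiles whose values avoid all proper outcomes in
every direction where they differ carry the same value. -/
private lemma main_ind (g : (∀ i, X i) → A) (hWTT : WTT g) (hns : NoSink g) :
    ∀ (k : ℕ) (x y : ∀ i, X i),
      (Finset.univ.filter fun i : Fin n => x i ≠ y i).card ≤ k →
      (∀ i : Fin n, x i ≠ y i →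
        (∀ c, IsProperOutcome g i (x i) c → g x ≠ c) ∧
        (∀ c, IsProperOutcome g i (y i) c → g y ≠ c)) →
      g x = g y := by
  intro k
  induction k with
  | zero =>
    intro x y hcard _
    have : ∀ i, x i = y i := by
      intro i
      by_contra h
      have hi : i ∈ Finset.univ.filter fun i : Fin n => x i ≠ y i := by
        simp [h]
      have := Finset.card_pos.mpr ⟨i, hi⟩
      omega
    exact congrArg g (funext this)
  | succ k ih =>
    intro x y hcard hunc
    by_cases hxy : ∀ i, x i = y i
    · exact congrArg g (funext hxy)
    · push_neg at hxy
      obtain ⟨i, hi⟩ := hxy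
      have hxupd : Function.update x i (x i) = x := Function.update_eq_self ..
      have hyupd : Function.update y i (y i) = y := Function.update_eq_self ..
      have hmem : i ∈ Finset.univ.filter fun j : Fin n => x j ≠ y j := by simp [hi]
      have hcard' : ∀ x' : ∀ j, X j, x' = Function.update x i (y i) →
          (Finset.univ.filter fun j : Fin n => x' j ≠ y j).card ≤ k := by
        intro x' hx'
        have hsub : (Finset.univ.filter fun j : Fin n => x' j ≠ y j) ⊆
            (Finset.univ.filter fun j : Fin n => x j ≠ y j).erase i := by
          intro j hj
          simp only [Finset.mem_filter, Finset.mem_univ, true_and] at hj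
          have hji : j ≠ i := by
            intro h
            subst h
            rw [hx', Function.update_self] at hj
            exact hj rfl
          refine Finset.mem_erase.mpr ⟨hji, ?_⟩
          simp only [Finset.mem_filter, Finset.mem_univ, true_and]
          rwa [hx', Function.update_of_ne hji] at hj
        calc (Finset.univ.filter fun j : Fin n => x' j ≠ y j).card
            ≤ ((Finset.univ.filter fun j : Fin n => x j ≠ y j).erase i).card :=
              Finset.card_le_card hsub
          _ = (Finset.univ.filter fun j : Fin n => x j ≠ y j).card - 1 :=
              Finset.card_erase_of_mem hmem
          _ ≤ k := by omega
      have hcard'' : ∀ y' : ∀ j, X j, y' = Function.update y i (x i) →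
          (Finset.univ.filter fun j : Fin n => x j ≠ y' j).card ≤ k := by
        intro y' hy'
        have hsub : (Finset.univ.filter fun j : Fin n => x j ≠ y' j) ⊆
            (Finset.univ.filter fun j : Fin n => x j ≠ y j).erase i := by
          intro j hj
          simp only [Finset.mem_filter, Finset.mem_univ, true_and] at hj
          have hji : j ≠ i := by
            intro h
            subst h
            rw [hy', Function.update_self] at hj
            exact hj rfl
          refine Finset.mem_erase.mpr ⟨hji, ?_⟩
          simp only [Finset.mem_filter, Finset.mem_univ, true_and]
          rwa [hy', Function.update_of_ne hji] at hj
        calc (Finset.univ.filter fun j : Fin n => x j ≠ y' j).card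
            ≤ ((Finset.univ.filter fun j : Fin n => x j ≠ y j).erase i).card :=
              Finset.card_le_card hsub
          _ = (Finset.univ.filter fun j : Fin n => x j ≠ y j).card - 1 :=
              Finset.card_erase_of_mem hmem
          _ ≤ k := by omega
      rcases hWTT i x y (x i) (y i) with h | h | h | h
      · -- g x = g (update x i (y i)) : recurse
        rw [hxupd] at h
        have hrec := ih (Function.update x i (y i)) y (hcard' _ rfl) ?_
        · exact h.trans hrec
        · intro j hj
          have hji : j ≠ i := by
            intro he
            subst he
            rw [Function.update_self] at hj
            exact hj rfl
          rw [Function.update_of_ne hji] at hj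
          refine ⟨?_, (hunc j hj).2⟩
          rw [Function.update_of_ne hji, ← h]
          exact (hunc j hj).1
      · -- g x = g (update y i (x i)) : one-box between update y i (x i) and y
        rw [hxupd] at h
        have hbox := oneBox g hWTT hns i (Function.update y i (x i)) (y i) ?_ ?_
        · rw [upd_upd, hyupd] at hbox
          exact h.trans hbox
        · intro c hc
          rw [← h]
          rw [Function.update_self] at hc
          exact (hunc i hi).1 c hc
        · intro c hc
          rw [upd_upd, hyupd]
          exact (hunc i hi).2 c hc
      · -- g y = g (update y i (x i)) : recurse
        rw [hyupd] at h
        have hrec := ih x (Function.update y i (x i)) (hcard'' _ rfl) ?_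
        · exact hrec.trans h.symm
        · intro j hj
          have hji : j ≠ i := by
            intro he
            subst he
            rw [Function.update_self] at hj
            exact hj rfl
          rw [Function.update_of_ne hji] at hj
          refine ⟨(hunc j hj).1, ?_⟩
          rw [Function.update_of_ne hji, ← h]
          exact (hunc j hj).2
      · -- g y = g (update x i (y i)) : one-box between x and update x i (y i)
        rw [hyupd] at h
        have hbox := oneBox g hWTT hns i x (y i) ?_ ?_
        · exact hbox.trans h.symm
        · exact (hunc i hi).1
        · intro c hc
          rw [← h]
          exact (hunc i hi).2 c hc

end AuxLemmas

/-- No-sink case: in a no-sink WTT game form, any two profiles in a common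
hyperplane perpendicular to the last direction which are uncovered by the
proper outcomes of the hyperplanes through them in the remaining directions
carry the same outcome, and the game form is separable. -/
theorem stmt15 {m : ℕ} {X : Fin (m + 1) → Type*} {A : Type*}
    [∀ i, Fintype (X i)] [∀ i, Nonempty (X i)]
    (g : (∀ i, X i) → A) (hWTT : WTT g)
    (hconst : NoConstantHyperplane g) (hdup : NoDuplicateHyperplanes g)
    (hns : NoSink g) :
    (∀ x y : ∀ i, X i, x (Fin.last m) = y (Fin.last m) →
      (∀ i, i ≠ Fin.last m → ∀ c, IsProperOutcome g i (x i) c → g x ≠ c) →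
      (∀ i, i ≠ Fin.last m → ∀ c, IsProperOutcome g i (y i) c → g y ≠ c) →
      g x = g y) ∧
    ∃ f : ∀ i, X i → A, ∀ x : ∀ i, X i, ∃ i, g x = f i (x i) := by
  classical
  have part1 : ∀ x y : ∀ i, X i, x (Fin.last m) = y (Fin.last m) →
      (∀ i, i ≠ Fin.last m → ∀ c, IsProperOutcome g i (x i) c → g x ≠ c) →
      (∀ i, i ≠ Fin.last m → ∀ c, IsProperOutcome g i (y i) c → g y ≠ c) →
      g x = g y := by
    intro x y hlast hx hy
    refine main_ind g hWTT hns
      ((Finset.univ.filter fun i : Fin (m + 1) => x i ≠ y i).card) x y le_rfl ?_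
    intro i hi
    have hil : i ≠ Fin.last m := fun h => hi (h ▸ hlast)
    exact ⟨hx i hil, hy i hil⟩
  refine ⟨part1, ?_⟩
  have hpo : ∀ (i : Fin (m + 1)) (v : X i), ∃ c, IsProperOutcome g i v c := by
    intro i v
    obtain ⟨v', c, h1, h2⟩ := hns i v
    exact ⟨c, v', h1, h2⟩
  have a₀ : A := g (fun i => Classical.arbitrary (X i))
  refine ⟨fun i v =>
    if i = Fin.last m then
      (if h2 : ∃ z : ∀ j, X j, z i = v ∧
          (∀ j, j ≠ Fin.last m → ∀ c, IsProperOutcome g j (z j) c → g z ≠ c)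
        then g h2.choose else a₀)
    else (hpo i v).choose, ?_⟩
  intro x
  by_cases hu : ∀ j, j ≠ Fin.last m → ∀ c, IsProperOutcome g j (x j) c → g x ≠ c
  · refine ⟨Fin.last m, ?_⟩
    have h2 : ∃ z : ∀ j, X j, z (Fin.last m) = x (Fin.last m) ∧
        (∀ j, j ≠ Fin.last m → ∀ c, IsProperOutcome g j (z j) c → g z ≠ c) := ⟨x, rfl, hu⟩
    simp only [if_pos rfl]
    rw [dif_pos h2]
    obtain ⟨hz1, hz2⟩ := h2.choose_spec
    exact part1 x h2.choose hz1.symm hu hz2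
  · push_neg at hu
    obtain ⟨j, hjL, c, hc, hgx⟩ := hu
    refine ⟨j, ?_⟩
    simp only [if_neg hjL]
    rw [hgx]
    exact proper_unique g hWTT hdup j (x j) hc (hpo j (x j)).choose_spec
end

section
/- (Forcing cube.) Consider the 2×2×2 game form with values g(1,1,1)=d, g(2,1,1)=a, g(1,2,1)=a, g(2,2,1)=c, g(1,1,2)=f, g(2,1,2)=b, g(1,2,2)=b, g(2,2,2)=e, where a,b,c,d,e,f are six pairwise distinct outcomes. Then in every feasible assignment of outcomes to the six hyperplanes, the hyperplane {x₃=1} is assigned a and the hyperplane {x₃=2} is assigned b. -/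
/-!
If `{x₃ = 1}` were not assigned `a`, the two profiles with outcome `a` force `a` onto one of
`{x₁ = 1}, {x₂ = 2}` and onto one of `{x₁ = 2}, {x₂ = 1}`; in each of the four resulting cases
the remaining six profiles leave too few hyperplanes for the other outcomes, forcing two of them
to coincide. Reversing the third coordinate maps the cube to the same cube with
`a ↔ b`, `c ↔ e`, `d ↔ f`, so the claim for `{x₃ = 2}` is the same statement.
-/

namespace GameForm

variable {α β γ A : Type*}

def IsFeasible (g : α → β → γ → A) (h₁ : α → A) (h₂ : β → A) (h₃ : γ → A) : Prop :=
  ∀ x y z, g x y z = h₁ x ∨ g x y z = h₂ y ∨ g x y z = h₃ z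

theorem IsFeasible.comp_third {γ' : Type*} {g : α → β → γ → A} {h₁ : α → A} {h₂ : β → A}
    {h₃ : γ → A} (hg : IsFeasible g h₁ h₂ h₃) (σ : γ' → γ) :
    IsFeasible (fun x y z ↦ g x y (σ z)) h₁ h₂ (h₃ ∘ σ) :=
  fun x y z ↦ hg x y (σ z)

def forcingCube (a b c d e f : A) : Fin 2 → Fin 2 → Fin 2 → A :=
  ![![![d, f], ![a, b]], ![![a, b], ![c, e]]]

theorem forcingCube_rev_third (a b c d e f : A) :
    (fun x y z ↦ forcingCube a b c d e f x y (Fin.rev z)) = forcingCube b a e f c d := by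
  funext x y z
  fin_cases x <;> fin_cases y <;> fin_cases z <;> rfl

theorem forcingCube_third_zero {a b c d e f : A}
    (hab : a ≠ b) (hac : a ≠ c) (had : a ≠ d) (hae : a ≠ e) (haf : a ≠ f)
    (hbe : b ≠ e) (hbf : b ≠ f) (hcd : c ≠ d) (hce : c ≠ e) (hdf : d ≠ f) (hef : e ≠ f)
    {h₁ h₂ h₃ : Fin 2 → A} (hg : IsFeasible (forcingCube a b c d e f) h₁ h₂ h₃) :
    h₃ 0 = a := by
  have g000 := hg 0 0 0
  have g001 := hg 0 0 1
  have g010 := hg 0 1 0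
  have g011 := hg 0 1 1
  have g100 := hg 1 0 0
  have g101 := hg 1 0 1
  have g110 := hg 1 1 0
  have g111 := hg 1 1 1
  simp only [forcingCube, Matrix.cons_val_zero, Matrix.cons_val_one]
    at g000 g001 g010 g011 g100 g101 g110 g111
  by_contra hta
  rcases g010 with ha | ha | ha <;> rcases g100 with ha' | ha' | ha' <;> grind

end GameForm

open GameForm in
theorem stmt17_general {A : Type*} (a b c d e f : A)
    (hab : a ≠ b) (hac : a ≠ c) (had : a ≠ d) (hae : a ≠ e) (haf : a ≠ f)
    (hbc : b ≠ c) (hbd : b ≠ d) (hbe : b ≠ e) (hbf : b ≠ f)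
    (hcd : c ≠ d) (hce : c ≠ e)
    (hdf : d ≠ f) (hef : e ≠ f)
    (h₁ h₂ h₃ : Fin 2 → A)
    (hfeas : ∀ x y z : Fin 2,
      (![![![d, f], ![a, b]], ![![a, b], ![c, e]]] : Fin 2 → Fin 2 → Fin 2 → A) x y z = h₁ x ∨
      (![![![d, f], ![a, b]], ![![a, b], ![c, e]]] : Fin 2 → Fin 2 → Fin 2 → A) x y z = h₂ y ∨
      (![![![d, f], ![a, b]], ![![a, b], ![c, e]]] : Fin 2 → Fin 2 → Fin 2 → A) x y z = h₃ z) :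
    h₃ 0 = a ∧ h₃ 1 = b := by
  have hg : IsFeasible (forcingCube a b c d e f) h₁ h₂ h₃ := hfeas
  have hg' : IsFeasible (forcingCube b a e f c d) h₁ h₂ (h₃ ∘ Fin.rev) :=
    forcingCube_rev_third a b c d e f ▸ hg.comp_third Fin.rev
  exact ⟨forcingCube_third_zero hab hac had hae haf hbe hbf hcd hce hdf hef hg,
    forcingCube_third_zero hab.symm hbe hbf hbc hbd hac had hef hce.symm hdf.symm hcd hg'⟩

/-- The forcing cube: in every feasible assignment of outcomes to the six
hyperplanes of the given 2×2×2 game form with six pairwise distinct outcomes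
a,b,c,d,e,f, the hyperplane {x₃ = 1} is assigned a and {x₃ = 2} is assigned b. -/
theorem stmt17 {A : Type*} (a b c d e f : A)
    (hab : a ≠ b) (hac : a ≠ c) (had : a ≠ d) (hae : a ≠ e) (haf : a ≠ f)
    (hbc : b ≠ c) (hbd : b ≠ d) (hbe : b ≠ e) (hbf : b ≠ f)
    (hcd : c ≠ d) (hce : c ≠ e) (hcf : c ≠ f)
    (hde : d ≠ e) (hdf : d ≠ f) (hef : e ≠ f)
    (h₁ h₂ h₃ : Fin 2 → A)
    (hfeas : ∀ x y z : Fin 2,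
      (![![![d, f], ![a, b]], ![![a, b], ![c, e]]] : Fin 2 → Fin 2 → Fin 2 → A) x y z = h₁ x ∨
      (![![![d, f], ![a, b]], ![![a, b], ![c, e]]] : Fin 2 → Fin 2 → Fin 2 → A) x y z = h₂ y ∨
      (![![![d, f], ![a, b]], ![![a, b], ![c, e]]] : Fin 2 → Fin 2 → Fin 2 → A) x y z = h₃ z) :
    h₃ 0 = a ∧ h₃ 1 = b :=
  stmt17_general a b c d e f hab hac had hae haf hbc hbd hbe hbf hcd hce hdf hef h₁ h₂ h₃ hfeas
end

section
/- For n = 2, separability of a two-person discrete function g : X₁ × X₂ → A is equivalent to satisfiability of a 2-CNF: there exist Boolean values y¹_{j,k} (for j ∈ X₁, k ∈ A) and y²_{j,k} (for j ∈ X₂, k ∈ A) such that for every (x₁,x₂), y¹_{x₁,g(x₁,x₂)} ∨ y²_{x₂,g(x₁,x₂)} holds, and for each i ∈ {1,2}, each j ∈ Xᵢ and each pair of distinct outcomes k ≠ ℓ, ¬yⁱ_{j,k} ∨ ¬yⁱ_{j,ℓ} holds. -/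
/-- For two-person discrete functions, separability is equivalent to the
satisfiability of the associated 2-CNF. -/
theorem stmt19 {X₁ X₂ A : Type*}
    [Fintype X₁] [Nonempty X₁] [Fintype X₂] [Nonempty X₂] [Fintype A] [Nonempty A]
    (g : X₁ → X₂ → A) :
    (∃ (g₁ : X₁ → A) (g₂ : X₂ → A),
      ∀ (x₁ : X₁) (x₂ : X₂), g x₁ x₂ = g₁ x₁ ∨ g x₁ x₂ = g₂ x₂) ↔
    (∃ (y₁ : X₁ → A → Bool) (y₂ : X₂ → A → Bool),
      (∀ (x₁ : X₁) (x₂ : X₂), y₁ x₁ (g x₁ x₂) = true ∨ y₂ x₂ (g x₁ x₂) = true) ∧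
      (∀ (j : X₁) (k l : A), k ≠ l → (y₁ j k = false ∨ y₁ j l = false)) ∧
      (∀ (j : X₂) (k l : A), k ≠ l → (y₂ j k = false ∨ y₂ j l = false))) := by
  classical
  constructor
  · rintro ⟨g₁, g₂, h⟩
    refine ⟨fun j k => decide (k = g₁ j), fun j k => decide (k = g₂ j), ?_, ?_, ?_⟩
    · intro x₁ x₂
      rcases h x₁ x₂ with h' | h'
      · left; simp [h']
      · right; simp [h']
    · intro j k l hkl
      by_contra hc
      push_neg at hc
      obtain ⟨h1, h2⟩ := hc
      simp only [Bool.not_eq_false, decide_eq_true_eq] at h1 h2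
      exact hkl (h1.trans h2.symm)
    · intro j k l hkl
      by_contra hc
      push_neg at hc
      obtain ⟨h1, h2⟩ := hc
      simp only [Bool.not_eq_false, decide_eq_true_eq] at h1 h2
      exact hkl (h1.trans h2.symm)
  · rintro ⟨y₁, y₂, hcov, hu1, hu2⟩
    refine ⟨fun j => if h : ∃ k, y₁ j k = true then h.choose else Classical.arbitrary A,
            fun j => if h : ∃ k, y₂ j k = true then h.choose else Classical.arbitrary A,
            ?_⟩
    intro x₁ x₂
    rcases hcov x₁ x₂ with h' | h'
    · left
      have hex : ∃ k, y₁ x₁ k = true := ⟨_, h'⟩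
      beta_reduce
      rw [dif_pos hex]
      by_contra hne
      rcases hu1 x₁ (g x₁ x₂) hex.choose hne with h1 | h1
      · rw [h'] at h1; exact absurd h1 (by simp)
      · rw [hex.choose_spec] at h1; exact absurd h1 (by simp)
    · right
      have hex : ∃ k, y₂ x₂ k = true := ⟨_, h'⟩
      beta_reduce
      rw [dif_pos hex]
      by_contra hne
      rcases hu2 x₂ (g x₁ x₂) hex.choose hne with h1 | h1
      · rw [h'] at h1; exact absurd h1 (by simp)
      · rw [hex.choose_spec] at h1; exact absurd h1 (by simp)
end
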